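/- The quotient Boolean algebra P({l,r}*)/I, where I is the ideal of subsets of {l,r}* with no infinite antichain (for the prefix order), is atomless: every nonzero element strictly contains a nonzero element. -/

import Mathlib

/-- An antichain for the prefix order on finite binary words. -/
def IsAnti (A : Set (List Bool)) : Prop :=
  ∀ x ∈ A, ∀ y ∈ A, x ≠ y → ¬ x <+: y ∧ ¬ y <+: x

/-- `B` contains an infinite antichain for the prefix order. -/
def HasInfAnti (B : Set (List Bool)) : Prop :=
  ∃ A : Set (List Bool), A ⊆ B ∧ A.Infinite ∧ IsAnti A

open Set

theorem Set.Infinite.exists_infinite_subset_infinite_diff {α : Type*} {s : Set α}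
    (hs : s.Infinite) : ∃ t ⊆ s, t.Infinite ∧ (s \ t).Infinite := by
  obtain ⟨t, u, rfl, hdisj, hcard⟩ := hs.exists_union_disjoint_cardinal_eq_of_infinite
  have hu : u.Infinite ↔ t.Infinite := by
    simp only [← infinite_coe_iff, Cardinal.infinite_iff, hcard]
  have ht : t.Infinite := by
    by_contra h
    exact hs ((not_infinite.1 h).union (not_infinite.1 (mt hu.1 h)))
  refine ⟨t, subset_union_left, ht, ?_⟩
  rwa [union_sdiff_left, hdisj.symm.sdiff_eq_left, hu]

lemma IsAnti.mono {A B : Set (List Bool)} (h : IsAnti B) (hAB : A ⊆ B) : IsAnti A :=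
  fun x hx y hy hxy => h x (hAB hx) y (hAB hy) hxy

lemma not_hasInfAnti_empty : ¬ HasInfAnti ∅ :=
  fun ⟨_, hB, hBinf, _⟩ => hBinf (finite_empty.subset hB)

/-- `P({l,r}*)/I` is atomless: for every nonzero element `[X]` (i.e. `X ∉ I`) there is
an element `[Z]` with `0 < [Z] < [X]`, i.e. `Z ∉ I`, `Z \ X ∈ I`, and `[Z] ≠ [X]`
(`X \ Z ∉ I`). -/
theorem quotient_by_I_atomless :
    ∀ X : Set (List Bool), HasInfAnti X →
      ∃ Z : Set (List Bool), HasInfAnti Z ∧ ¬ HasInfAnti (Z \ X) ∧ HasInfAnti (X \ Z) := by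
  rintro X ⟨A, hAX, hA, hanti⟩
  obtain ⟨Z, hZA, hZ, hAZ⟩ := hA.exists_infinite_subset_infinite_diff
  refine ⟨Z, ⟨Z, subset_rfl, hZ, hanti.mono hZA⟩, ?_,
    ⟨A \ Z, sdiff_subset_sdiff_left hAX, hAZ, hanti.mono sdiff_subset⟩⟩
  rw [sdiff_eq_empty.2 (hZA.trans hAX)]
  exact not_hasInfAnti_empty
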